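/- Let S be a positive integer and let a, b, c be elements of the direct sum ⊕_{i∈ℤ} ℤ/2 (finitely supported functions ℤ → ℤ/2). If suppInt(a−b) ≤ S, suppInt(a−c) ≤ S, and suppInt(b−c) ≥ 2S, then the support of a−b and the support of a−c are disjoint sets of integers. -/

import Mathlib

/-! Every index in the support of `b - c = (a - c) - (a - b)` lies in the support of `a - b` or
of `a - c`. If these share an index `i`, both supports lie within distance `S - 1` of `i`, so the
support of `b - c` fits in an interval of length `2S - 1`, contradicting `suppInt (b - c) ≥ 2S`. -/

/-- The length of the smallest interval of integers containing the support of `x`: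
`max(supp x) − min(supp x) + 1` when `x ≠ 0`, and `0` when `x = 0`. -/
noncomputable def suppInt (x : ℤ →₀ ZMod 2) : ℤ :=
  if h : x.support.Nonempty then x.support.max' h - x.support.min' h + 1 else 0

theorem sub_add_one_le_suppInt {x : ℤ →₀ ZMod 2} {i j : ℤ} (hi : i ∈ x.support)
    (hj : j ∈ x.support) : j - i + 1 ≤ suppInt x := by
  rw [suppInt, dif_pos ⟨i, hi⟩]
  linarith [x.support.min'_le i hi, x.support.le_max' j hj]

theorem suppInt_le_of_support_subset_Icc {x : ℤ →₀ ZMod 2} {l u : ℤ}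
    (h : x.support ⊆ Finset.Icc l u) (hlu : l ≤ u + 1) : suppInt x ≤ u - l + 1 := by
  unfold suppInt
  split_ifs with hx
  · have hmax := Finset.mem_Icc.mp (h (x.support.max'_mem hx))
    have hmin := Finset.mem_Icc.mp (h (x.support.min'_mem hx))
    linarith [hmax.2, hmin.1]
  · linarith

theorem support_subset_Icc_of_suppInt_le {x : ℤ →₀ ZMod 2} {i S : ℤ} (hi : i ∈ x.support)
    (hx : suppInt x ≤ S) : x.support ⊆ Finset.Icc (i - (S - 1)) (i + (S - 1)) := fun j hj =>
  Finset.mem_Icc.mpr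
    ⟨by linarith [sub_add_one_le_suppInt hj hi], by linarith [sub_add_one_le_suppInt hi hj]⟩

theorem supports_disjoint_general
    (S : ℤ) (a b c : ℤ →₀ ZMod 2)
    (hab : suppInt (a - b) ≤ S) (hac : suppInt (a - c) ≤ S)
    (hbc : 2 * S ≤ suppInt (b - c)) :
    Disjoint (a - b).support (a - c).support := by
  by_contra hdis
  obtain ⟨i, hib, hic⟩ := Finset.not_disjoint_iff.mp hdis
  have hS : 1 ≤ S := by simpa using (sub_add_one_le_suppInt hib hib).trans hab
  have hbc_sub : (b - c).support ⊆ Finset.Icc (i - (S - 1)) (i + (S - 1)) := by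
    rw [← sub_sub_sub_cancel_left c b a]
    exact Finsupp.support_sub.trans <| Finset.union_subset
      (support_subset_Icc_of_suppInt_le hic hac) (support_subset_Icc_of_suppInt_le hib hab)
  have := suppInt_le_of_support_subset_Icc hbc_sub (by linarith)
  linarith

/-- If `a−b` and `a−c` have small support intervals while `b−c` has a large one,
then the supports of `a−b` and `a−c` are disjoint. -/
theorem supports_disjoint
    (S : ℤ) (hS : 0 < S) (a b c : ℤ →₀ ZMod 2)
    (hab : suppInt (a - b) ≤ S) (hac : suppInt (a - c) ≤ S)
    (hbc : 2 * S ≤ suppInt (b - c)) :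
    Disjoint (a - b).support (a - c).support :=
  supports_disjoint_general S a b c hab hac hbc
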